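/- arXiv:1308.6509 — 8 statements merged into one kernel-verified Lean document; each statement's English description precedes it below -/
import Mathlib

section
/- Let s be a string of length z ≥ 2 such that the prefix s[1..z-1] has a period q ≤ z/2 and s[z] ≠ s[z-q]. Then the smallest period of s exceeds z/2. -/
def IsPeriod {α : Type*} (s : List α) (q : ℕ) : Prop :=
  0 < q ∧ q ≤ s.length ∧ ∀ i, i + q < s.length → s[i]? = s[i + q]?

/-!
If `s` had a period `q' ≤ z/2`, then `q' ≠ q` (as `s[z] ≠ s[z-q]`), so both `q` and `q'` would
be periods of the prefix `s[1..z-1]`, whose length is at least `q + q'`. By the (weak)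
periodicity lemma the prefix then has period `gcd q q'`, which divides `q' - q`; hence
`s[z-q] = s[z-q']`, and the latter equals `s[z]` because `q'` is a period of `s`.
-/

namespace IsPeriod

variable {α : Type*} {t : List α} {p r : ℕ}

theorem getElem?_sub (h : IsPeriod t p) {j : ℕ} (hpj : p ≤ j) (hj : j < t.length) :
    t[j - p]? = t[j]? := by
  simpa [Nat.sub_add_cancel hpj] using h.2.2 (j - p) (by omega)

theorem getElem?_add_mul (h : IsPeriod t p) (i k : ℕ) (hi : i + k * p < t.length) :
    t[i]? = t[i + k * p]? := by
  induction k generalizing i with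
  | zero => simp
  | succ k ih =>
    have hshift : i + p + k * p = i + (k + 1) * p := by ring
    rw [h.2.2 i (by nlinarith), ih (i + p) (by omega), hshift]

theorem getElem?_eq_of_modEq (h : IsPeriod t p) {i j : ℕ} (hij : i ≡ j [MOD p])
    (hi : i < t.length) (hj : j < t.length) : t[i]? = t[j]? := by
  wlog hle : i ≤ j generalizing i j
  · exact (this hij.symm hj hi (by omega)).symm
  obtain ⟨k, hk⟩ := (Nat.modEq_iff_dvd' hle).mp hij
  have hj' : j = i + k * p := by rw [mul_comm, ← hk]; omega
  subst hj'
  exact h.getElem?_add_mul i k hj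

theorem sub (hp : IsPeriod t p) (hr : IsPeriod t r) (hpr : p < r) (hlen : p + r ≤ t.length) :
    IsPeriod t (r - p) := by
  refine ⟨by omega, by omega, fun i hi => ?_⟩
  by_cases hir : i + r < t.length
  · rw [hr.2.2 i hir, ← hp.getElem?_sub (by omega) hir, show i + r - p = i + (r - p) by omega]
  · -- near the end of `t`, step back by `p` first and then forward by `r`
    have hpi : p ≤ i := by omega
    have hback : t[i - p]? = t[i]? := hp.getElem?_sub hpi (by omega)
    rw [← hback, hr.2.2 (i - p) (by omega), show i - p + r = i + (r - p) by omega]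

/-- The weak form of the Fine–Wilf periodicity lemma. -/
theorem gcd (hp : IsPeriod t p) (hr : IsPeriod t r) (hlen : p + r ≤ t.length) :
    IsPeriod t (Nat.gcd p r) := by
  induction hn : p + r using Nat.strong_induction_on generalizing p r with
  | _ n ih =>
    wlog hpr : p ≤ r generalizing p r
    · rw [Nat.gcd_comm]
      exact this hr hp (by omega) (by omega) (by omega)
    obtain rfl | hpr := hpr.eq_or_lt
    · rwa [Nat.gcd_self]
    · have hp0 := hp.1
      rw [← Nat.gcd_sub_self_right hpr.le]
      exact ih (p + (r - p)) (by omega) hp (hp.sub hr hpr hlen) (by omega) rfl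

theorem take (h : IsPeriod t p) {n : ℕ} (hpn : p ≤ n) : IsPeriod (t.take n) p := by
  refine ⟨h.1, by simp [hpn, h.2.1], fun i hi => ?_⟩
  simp only [List.length_take] at hi
  rw [List.getElem?_take_of_lt (by omega), List.getElem?_take_of_lt (by omega)]
  exact h.2.2 i (by omega)

end IsPeriod

theorem break_correctness_general {α : Type*} (s : List α) (z q : ℕ)
    (hlen : s.length = z)
    (hq : IsPeriod (s.take (z - 1)) q) (hq2 : 2 * q ≤ z)
    (hne : s[z - 1]? ≠ s[z - 1 - q]?) :
    ∀ q', IsPeriod s q' → z < 2 * q' := by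
  intro q' hq'
  by_contra! hq'2
  have hprefix : (s.take (z - 1)).length = z - 1 := by simp [hlen]
  have hq0 := hq.1
  have hqz := hq.2.1
  have hq'0 := hq'.1
  have hlast : s[z - 1 - q']? = s[z - 1]? := hq'.getElem?_sub (by omega) (by omega)
  obtain rfl | hqq' := eq_or_ne q q'
  · exact hne hlast.symm
  have hg := hq.gcd (hq'.take (n := z - 1) (by omega)) (by omega)
  have hmod : z - 1 - q ≡ z - 1 - q' [MOD Nat.gcd q q'] :=
    calc z - 1 - q ≡ z - 1 - q + q [MOD Nat.gcd q q'] :=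
          ((Nat.modEq_zero_iff_dvd.mpr (Nat.gcd_dvd_left q q')).add_left _).symm
      _ = z - 1 - q' + q' := by omega
      _ ≡ z - 1 - q' [MOD Nat.gcd q q'] :=
          (Nat.modEq_zero_iff_dvd.mpr (Nat.gcd_dvd_right q q')).add_left _
  have hmid := hg.getElem?_eq_of_modEq hmod (by omega) (by omega)
  rw [List.getElem?_take_of_lt (by omega), List.getElem?_take_of_lt (by omega)] at hmid
  exact hne (hlast ▸ hmid).symm

/-- If `s` has length `z ≥ 2`, its prefix of length `z-1` has a period `q ≤ z/2`,
and the last letter `s[z]` differs from `s[z-q]` (0-based: `s.get? (z-1) ≠ s.get? (z-1-q)`),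
then every period of `s` exceeds `z/2`, i.e. the smallest period of `s` exceeds `z/2`. -/
theorem break_correctness {α : Type*} (s : List α) (z q : ℕ) (hz : 2 ≤ z)
    (hlen : s.length = z)
    (hq : IsPeriod (s.take (z - 1)) q) (hq2 : 2 * q ≤ z)
    (hne : s[z - 1]? ≠ s[z - 1 - q]?) :
    ∀ q', IsPeriod s q' → z < 2 * q' :=
  break_correctness_general s z q hlen hq hq2 hne
end

section
/- Let w1 and w2 be strings of the same length n with smallest periods q1 and q2 respectively, where q1 ≠ q2 and q1 + q2 ≤ n. Then every window of q1 + q2 consecutive aligned positions contains a mismatch, i.e., for every i with i + q1 + q2 - 1 ≤ n there exists j ∈ [i, i + q1 + q2 - 1] with w1[j] ≠ w2[j]. -/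
def SmallestPeriod {α : Type*} (s : List α) (q : ℕ) : Prop :=
  IsPeriod s q ∧ ∀ q', IsPeriod s q' → q ≤ q'

/-!
If `w1` and `w2` agreed on a window of length `q1 + q2`, then on that window each would have
both periods `q1` and `q2`, hence (Fine–Wilf) the period `d = gcd q1 q2`. A string of period `q`
that has period `d` on a window of length `q + d` has period `d` everywhere, because translation
by `q` carries every position to one inside the window. Minimality then forces
`q1 ≤ d` and `q2 ≤ d`, i.e. `q1 = d = q2`.
-/

def HasPeriodOn {β : Type*} (f : ℕ → β) (a b p : ℕ) : Prop :=
  ∀ i, a ≤ i → i + p < b → f i = f (i + p)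

theorem forall_lt_of_forall_Ico_of_iff_add {P : ℕ → Prop} {a p m : ℕ} (hp : 0 < p)
    (hm : a + p ≤ m) (hstep : ∀ i, i + p < m → (P i ↔ P (i + p)))
    (hwin : ∀ i, a ≤ i → i < a + p → P i) : ∀ i < m, P i := by
  have above : ∀ i, a ≤ i → i < m → P i := by
    intro i
    induction i using Nat.strong_induction_on with
    | _ i ih =>
      intro hai him
      by_cases hi : i < a + p
      · exact hwin i hai hi
      have h := ih (i - p) (by omega) (by omega) (by omega)
      rwa [hstep (i - p) (by omega), Nat.sub_add_cancel (by omega)] at h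
  intro i him
  induction h : a - i using Nat.strong_induction_on generalizing i with
  | _ k ih =>
    by_cases hai : a ≤ i
    · exact above i hai him
    exact (hstep i (by omega)).2 (ih (a - (i + p)) (by omega) (i + p) (by omega) rfl)

namespace HasPeriodOn

variable {β : Type*} {f g : ℕ → β} {a b p q : ℕ}

theorem mono {a' b' : ℕ} (hf : HasPeriodOn f a b p) (ha : a ≤ a') (hb : b' ≤ b) :
    HasPeriodOn f a' b' p :=
  fun i hi hib => hf i (by omega) (by omega)

theorem congr (hf : HasPeriodOn f a b p) (hfg : ∀ j, a ≤ j → j < b → f j = g j) :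
    HasPeriodOn g a b p := fun i hi hib => by
  rw [← hfg i hi (by omega), ← hfg (i + p) (by omega) hib, hf i hi hib]

theorem sub (hp : HasPeriodOn f a b p) (hq : HasPeriodOn f a b q) (hpq : p ≤ q)
    (hb : a + p + q ≤ b) : HasPeriodOn f a b (q - p) := by
  intro i hai hi
  by_cases hiq : i + q < b
  · rw [hq i hai hiq, hp (i + (q - p)) (by omega) (by omega), Nat.add_assoc,
      Nat.sub_add_cancel hpq]
  · have e1 := hp (i - p) (by omega) (by omega)
    have e2 := hq (i - p) (by omega) (by omega)
    rw [Nat.sub_add_cancel (by omega)] at e1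
    rw [← e1, e2, show i - p + q = i + (q - p) by omega]

/-- The Fine–Wilf periodicity lemma, in its weak form `p + q ≤ b - a`. -/
theorem gcd (hp : HasPeriodOn f a b p) (hq : HasPeriodOn f a b q) (hb : a + p + q ≤ b) :
    HasPeriodOn f a b (Nat.gcd p q) := by
  induction h : p + q using Nat.strong_induction_on generalizing p q with
  | _ n ih =>
    wlog hpq : p ≤ q generalizing p q
    · rw [Nat.gcd_comm]
      exact this hq hp (by omega) (by omega) (by omega)
    rcases p.eq_zero_or_pos with rfl | hp0
    · simpa using hq
    rw [← Nat.gcd_sub_self_right hpq]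
    exact ih q (by omega) hp (hp.sub hq hpq hb) (by omega) (by omega)

theorem extend {n d : ℕ} (hp : HasPeriodOn f 0 n p) (hp0 : 0 < p)
    (hd : HasPeriodOn f a (a + p + d) d) (hn : a + p + d ≤ n) : HasPeriodOn f 0 n d := by
  intro i _ hi
  refine forall_lt_of_forall_Ico_of_iff_add (P := fun i => f i = f (i + d)) hp0
    (show a + p ≤ n - d by omega) (fun j hj => ?_) (fun j hj hjp => hd j hj (by omega)) i
    (by omega)
  rw [hp j (Nat.zero_le _) (by omega), hp (j + d) (Nat.zero_le _) (by omega),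
    Nat.add_right_comm]

end HasPeriodOn

theorem IsPeriod.hasPeriodOn {α : Type*} {w : List α} {q : ℕ} (hw : IsPeriod w q) :
    HasPeriodOn (w[·]?) 0 w.length q :=
  fun i _ hi => hw.2.2 i hi

theorem SmallestPeriod.le_of_hasPeriodOn {α : Type*} {w : List α} {q a d : ℕ}
    (hw : SmallestPeriod w q) (hd0 : 0 < d) (hd : HasPeriodOn (w[·]?) a (a + q + d) d)
    (hn : a + q + d ≤ w.length) : q ≤ d :=
  hw.2 d ⟨hd0, by omega,
    fun i hi => (hw.1.hasPeriodOn.extend hw.1.1 hd hn) i (Nat.zero_le _) hi⟩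

theorem window_contains_mismatch_general {α : Type*} (w1 w2 : List α) (q1 q2 : ℕ)
    (hlen : w1.length = w2.length)
    (h1 : SmallestPeriod w1 q1) (h2 : SmallestPeriod w2 q2)
    (hne : q1 ≠ q2) :
    ∀ i, i + q1 + q2 ≤ w1.length →
      ∃ j, i ≤ j ∧ j < i + q1 + q2 ∧ w1[j]? ≠ w2[j]? := by
  intro i hi
  by_contra! hagree
  obtain ⟨hq1, hq2⟩ : 0 < q1 ∧ 0 < q2 := ⟨h1.1.1, h2.1.1⟩
  have hd1 : Nat.gcd q1 q2 ≤ q1 := Nat.gcd_le_left q2 hq1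
  have hd2 : Nat.gcd q1 q2 ≤ q2 := Nat.gcd_le_right q1 hq2
  have hd0 : 0 < Nat.gcd q1 q2 := Nat.gcd_pos_of_pos_left q2 hq1
  have p1 : HasPeriodOn (w1[·]?) i (i + q1 + q2) q1 := h1.1.hasPeriodOn.mono (by omega) hi
  have p2 : HasPeriodOn (w2[·]?) i (i + q1 + q2) q2 :=
    h2.1.hasPeriodOn.mono (by omega) (by omega)
  have g1 := p1.gcd (p2.congr fun j hj hj' => (hagree j hj hj').symm) le_rfl
  have g2 := g1.congr hagree
  have := h1.le_of_hasPeriodOn hd0 (g1.mono le_rfl (by omega)) (by omega)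
  have := h2.le_of_hasPeriodOn hd0 (g2.mono le_rfl (by omega)) (by omega)
  omega

/-- If `w1, w2` have the same length `n`, smallest periods `q1 ≠ q2` with
`q1 + q2 ≤ n`, then every window of `q1 + q2` consecutive aligned positions
contains a mismatch. -/
theorem window_contains_mismatch {α : Type*} (w1 w2 : List α) (q1 q2 : ℕ)
    (hlen : w1.length = w2.length)
    (h1 : SmallestPeriod w1 q1) (h2 : SmallestPeriod w2 q2)
    (hne : q1 ≠ q2) (hsum : q1 + q2 ≤ w1.length) :
    ∀ i, i + q1 + q2 ≤ w1.length →
      ∃ j, i ≤ j ∧ j < i + q1 + q2 ∧ w1[j]? ≠ w2[j]? :=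
  window_contains_mismatch_general w1 w2 q1 q2 hlen h1 h2 hne
end

section
/- Let z and k be positive integers, and let w1, w2 be strings of equal length n ≥ z(k+1) such that w1 ≠ w2 and both w1 and w2 have (not necessarily smallest) periods at most z/2. Then the Hamming distance between w1 and w2 is at least k+1. -/
def hamming {α : Type*} [DecidableEq α] (s t : List α) : ℕ :=
  ((Finset.range s.length).filter fun i => s[i]? ≠ t[i]?).card

/-!
If `w₁` and `w₂` have periods `p` and `q`, chasing a position along the shifts by `p` and by `q`
shows that agreement of `w₁` and `w₂` at `i + p` and `i + q` makes agreement at `i` equivalent to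
agreement at `i + p + q`. Hence agreement on a window of length `p + q` spreads to the whole string,
so when `w₁ ≠ w₂` and `p + q ≤ z` every window of length `z` contains a mismatch. The string
contains `k + 1` disjoint such windows.
-/

open Finset

theorem forall_lt_of_window {P : ℕ → Prop} {n p q a : ℕ} (hp : 0 < p) (hq : 0 < q)
    (hstep : ∀ i, i + p + q < n → P (i + p) → P (i + q) → (P i ↔ P (i + p + q)))
    (hwin : ∀ i, a ≤ i → i < a + p + q → P i) (ha : a + p + q ≤ n) :
    ∀ i < n, P i := by
  have above : ∀ i, a ≤ i → i < n → P i := by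
    intro i
    induction i using Nat.strong_induction_on with
    | _ i ih =>
      intro hai hin
      by_cases hi : i < a + p + q
      · exact hwin i hai hi
      · obtain ⟨j, rfl⟩ : ∃ j, i = j + p + q := ⟨i - p - q, by omega⟩
        exact (hstep j hin (ih _ (by omega) (by omega) (by omega))
          (ih _ (by omega) (by omega) (by omega))).1 (ih _ (by omega) (by omega) (by omega))
  have below : ∀ d i, a ≤ i + d → i < n → P i := by
    intro d
    induction d with
    | zero => exact fun i hi => above i (by omega)
    | succ d ih =>
      intro i hid hin
      by_cases hai : a ≤ i + d
      · exact ih i hai hin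
      · exact (hstep i (by omega) (ih _ (by omega) (by omega)) (ih _ (by omega) (by omega))).2
          (ih _ (by omega) (by omega))
  exact fun i hi => below a i (by omega) hi

namespace IsPeriod

variable {α : Type*} {s t : List α} {p q : ℕ}

theorem getElem?_add (hs : IsPeriod s p) {i : ℕ} (hi : i + p < s.length) :
    s[i]? = s[i + p]? :=
  hs.2.2 i hi

theorem getElem?_eq_iff_getElem?_add_add_eq (hs : IsPeriod s p) (ht : IsPeriod t q)
    (hlen : s.length = t.length) {i : ℕ} (hi : i + p + q < s.length)
    (hp : s[i + p]? = t[i + p]?) (hq : s[i + q]? = t[i + q]?) :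
    s[i]? = t[i]? ↔ s[i + p + q]? = t[i + p + q]? := by
  have hst : s[i]? = t[i + p + q]? :=
    (hs.getElem?_add (by omega)).trans (hp.trans (ht.getElem?_add (by omega)))
  have hts : t[i]? = s[i + p + q]? := by
    rw [ht.getElem?_add (by omega), ← hq, hs.getElem?_add (by omega), Nat.add_right_comm]
  rw [hst, hts, eq_comm]

theorem eq_of_agree_on_window (hs : IsPeriod s p) (ht : IsPeriod t q)
    (hlen : s.length = t.length) {a : ℕ} (ha : a + p + q ≤ s.length)
    (hwin : ∀ i, a ≤ i → i < a + p + q → s[i]? = t[i]?) : s = t := by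
  have hagree := forall_lt_of_window hs.1 ht.1
    (fun i hi => hs.getElem?_eq_iff_getElem?_add_add_eq ht hlen hi) hwin ha
  refine List.ext_getElem? fun i => ?_
  by_cases hi : i < s.length
  · exact hagree i hi
  · rw [List.getElem?_eq_none (by omega), List.getElem?_eq_none (by omega)]

theorem exists_mismatch_in_window (hs : IsPeriod s p) (ht : IsPeriod t q)
    (hlen : s.length = t.length) (hne : s ≠ t) {z a : ℕ} (hpq : p + q ≤ z)
    (ha : a + z ≤ s.length) : ∃ i ∈ Ico a (a + z), s[i]? ≠ t[i]? := by
  by_contra! hagree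
  exact hne <| hs.eq_of_agree_on_window ht hlen (a := a) (by omega)
    fun i hai hi => hagree i (mem_Ico.2 ⟨hai, by omega⟩)

end IsPeriod

theorem le_card_filter_range_mul {P : ℕ → Prop} [DecidablePred P] {z : ℕ} :
    ∀ k, (∀ m < k, ∃ i ∈ Ico (m * z) (m * z + z), P i) → k ≤ #{i ∈ range (k * z) | P i}
  | 0, _ => Nat.zero_le _
  | k + 1, hblocks => by
    have ih := le_card_filter_range_mul k fun m hm => hblocks m (by omega)
    obtain ⟨i, hi, hPi⟩ := hblocks k k.lt_succ_self
    rw [mem_Ico] at hi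
    have hsub : {i ∈ range (k * z) | P i} ⊂ {i ∈ range ((k + 1) * z) | P i} := by
      refine (ssubset_iff_of_subset ?_).2 ⟨i, ?_, ?_⟩
      · exact filter_subset_filter _ (range_subset_range.2 (Nat.mul_le_mul_right _ k.le_succ))
      · simp only [mem_filter, mem_range]
        exact ⟨by rw [Nat.succ_mul]; omega, hPi⟩
      · simp only [mem_filter, mem_range, not_and]
        intro h; omega
    exact (Nat.succ_le_succ ih).trans (card_lt_card hsub)

theorem periodic_mismatches_general {α : Type*} [DecidableEq α] (z k : ℕ)
    (w1 w2 : List α)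
    (hlen : w1.length = w2.length) (hn : z * (k + 1) ≤ w1.length)
    (hne : w1 ≠ w2)
    (hq1 : ∃ q, IsPeriod w1 q ∧ 2 * q ≤ z)
    (hq2 : ∃ q, IsPeriod w2 q ∧ 2 * q ≤ z) :
    k + 1 ≤ hamming w1 w2 := by
  obtain ⟨p, hp, hpz⟩ := hq1
  obtain ⟨q, hq, hqz⟩ := hq2
  have hblocks : ∀ m < k + 1, ∃ i ∈ Ico (m * z) (m * z + z), w1[i]? ≠ w2[i]? := fun m hm =>
    hp.exists_mismatch_in_window hq hlen hne (by omega)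
      (by nlinarith [Nat.mul_le_mul_left z (Nat.succ_le_of_lt hm)])
  calc k + 1 ≤ #{i ∈ range ((k + 1) * z) | w1[i]? ≠ w2[i]?} := le_card_filter_range_mul _ hblocks
    _ ≤ #{i ∈ range w1.length | w1[i]? ≠ w2[i]?} :=
      card_le_card (filter_subset_filter _ (range_subset_range.2 (by rwa [mul_comm])))
    _ = hamming w1 w2 := rfl

/-- Proposition 4 of the paper: two distinct equal-length strings of length at
least `z(k+1)`, both having some period at most `z/2`, have Hamming distance at
least `k+1`. -/
theorem periodic_mismatches {α : Type*} [DecidableEq α] (z k : ℕ)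
    (hz : 0 < z) (hk : 0 < k) (w1 w2 : List α)
    (hlen : w1.length = w2.length) (hn : z * (k + 1) ≤ w1.length)
    (hne : w1 ≠ w2)
    (hq1 : ∃ q, IsPeriod w1 q ∧ 2 * q ≤ z)
    (hq2 : ∃ q, IsPeriod w2 q ∧ 2 * q ≤ z) :
    k + 1 ≤ hamming w1 w2 :=
  periodic_mismatches_general z k w1 w2 hlen hn hne hq1 hq2
end

section
/- Let p be a string and z a positive integer. The greedy procedure that scans p left to right and, whenever the current window p[i..i+z-1] has smallest period exceeding z/2, selects it as a break and jumps to position i+z (otherwise advancing by one), selects the maximum possible number of pairwise disjoint length-z factors of p each having smallest period exceeding z/2. -/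
/-- The length-`z` factor of `p` starting at (0-based) position `i` is a `z`-break:
its smallest period exceeds `z/2`. -/
def IsBreakAt {α : Type*} (p : List α) (z i : ℕ) : Prop :=
  i + z ≤ p.length ∧ ∀ q, IsPeriod ((p.drop i).take z) q → z < 2 * q

/-- `S` is a set of starting positions of pairwise disjoint `z`-breaks of `p`. -/
def DisjointBreakFamily {α : Type*} (p : List α) (z : ℕ) (S : Finset ℕ) : Prop :=
  (∀ i ∈ S, IsBreakAt p z i) ∧ ∀ i ∈ S, ∀ j ∈ S, i < j → i + z ≤ j

open Classical in
/-- The greedy left-to-right procedure: if the window at `i` is a break, select it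
and jump to `i + z`, otherwise advance by one. (`fuel` bounds the recursion.) -/
noncomputable def greedyBreaks {α : Type*} (p : List α) (z : ℕ) : ℕ → ℕ → List ℕ
  | 0, _ => []
  | fuel + 1, i =>
    if i + z ≤ p.length then
      if IsBreakAt p z i then i :: greedyBreaks p z fuel (i + z)
      else greedyBreaks p z fuel (i + 1)
    else []

/-!
A disjoint family of `z`-breaks all starting at or after position `i` has at most one break
starting in `[i, i + z)`, and none at `i` unless the window at `i` is itself a break. So, whether
the greedy scan takes the window at `i` (and jumps to `i + z`) or skips it, it loses nothing
against the family, and induction along the scan bounds the family's size by the greedy count.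
-/

section greedyBreaks

variable {α : Type*} {p : List α} {z : ℕ}

theorem le_of_mem_greedyBreaks {fuel i j : ℕ} (h : j ∈ greedyBreaks p z fuel i) : i ≤ j := by
  induction fuel generalizing i with
  | zero => simp [greedyBreaks] at h
  | succ n ih =>
    rw [greedyBreaks] at h
    split_ifs at h
    · rcases List.mem_cons.mp h with rfl | h
      · exact le_rfl
      · exact (Nat.le_add_right i z).trans (ih h)
    · exact (Nat.le_succ i).trans (ih h)
    · simp at h

theorem isBreakAt_of_mem_greedyBreaks {fuel i j : ℕ} (h : j ∈ greedyBreaks p z fuel i) :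
    IsBreakAt p z j := by
  induction fuel generalizing i with
  | zero => simp [greedyBreaks] at h
  | succ n ih =>
    rw [greedyBreaks] at h
    split_ifs at h with _ hbreak
    · rcases List.mem_cons.mp h with rfl | h
      · exact hbreak
      · exact ih h
    · exact ih h
    · simp at h

theorem pairwise_greedyBreaks (fuel i : ℕ) :
    (greedyBreaks p z fuel i).Pairwise (fun a b => a + z ≤ b) := by
  induction fuel generalizing i with
  | zero => simp [greedyBreaks]
  | succ n ih =>
    rw [greedyBreaks]
    split_ifs
    · exact List.pairwise_cons.mpr ⟨fun _ hj => le_of_mem_greedyBreaks hj, ih _⟩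
    · exact ih _
    · exact List.Pairwise.nil

end greedyBreaks

namespace DisjointBreakFamily

variable {α : Type*} {p : List α} {z i : ℕ} {S T : Finset ℕ}

theorem mono (hS : DisjointBreakFamily p z S) (hTS : T ⊆ S) : DisjointBreakFamily p z T :=
  ⟨fun j hj => hS.1 j (hTS hj), fun j hj k hk => hS.2 j (hTS hj) k (hTS hk)⟩

theorem card_filter_lt_le_one (hS : DisjointBreakFamily p z S) (hi : ∀ j ∈ S, i ≤ j) :
    (S.filter (· < i + z)).card ≤ 1 := by
  refine Finset.card_le_one.mpr fun a ha b hb => ?_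
  simp only [Finset.mem_filter] at ha hb
  by_contra hab
  rcases Nat.lt_or_gt_of_ne hab with h | h
  · have := hS.2 a ha.1 b hb.1 h
    have := hi a ha.1
    omega
  · have := hS.2 b hb.1 a ha.1 h
    have := hi b hb.1
    omega

theorem succ_le_of_not_isBreakAt (hS : DisjointBreakFamily p z S) (hi : ∀ j ∈ S, i ≤ j)
    (hbreak : ¬IsBreakAt p z i) : ∀ j ∈ S, i + 1 ≤ j := fun j hj =>
  (hi j hj).lt_of_ne (fun hij => hbreak (hij ▸ hS.1 j hj))

theorem eq_empty_of_length_lt (hS : DisjointBreakFamily p z S) (hi : ∀ j ∈ S, i ≤ j)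
    (hlen : p.length < i + z) : S = ∅ :=
  Finset.eq_empty_of_forall_notMem fun j hj => by
    have := (hS.1 j hj).1
    have := hi j hj
    omega

theorem card_le_length_greedyBreaks (hz : 0 < z) {fuel i : ℕ} (hfuel : p.length < i + fuel)
    (hS : DisjointBreakFamily p z S) (hi : ∀ j ∈ S, i ≤ j) :
    S.card ≤ (greedyBreaks p z fuel i).length := by
  induction fuel generalizing i S with
  | zero => simp [hS.eq_empty_of_length_lt hi (by omega)]
  | succ n ih =>
    rw [greedyBreaks]
    split_ifs with hlen hbreak
    · have hlate : (S.filter (¬· < i + z)).card ≤ (greedyBreaks p z n (i + z)).length :=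
        ih (by omega) (hS.mono (Finset.filter_subset _ _))
          fun j hj => not_lt.mp (Finset.mem_filter.mp hj).2
      rw [List.length_cons, ← Finset.card_filter_add_card_filter_not (· < i + z)]
      have := hS.card_filter_lt_le_one hi
      omega
    · exact ih (by omega) hS (hS.succ_le_of_not_isBreakAt hi hbreak)
    · simp [hS.eq_empty_of_length_lt hi (by omega)]

end DisjointBreakFamily

/-- Lemma 8 of the paper: the greedy procedure selects pairwise disjoint `z`-breaks
of `p`, and their number is the maximum possible over all families of pairwise
disjoint `z`-breaks. -/
theorem greedy_breaks_optimal {α : Type*} (p : List α) (z : ℕ) (hz : 0 < z) :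
    (∀ i ∈ greedyBreaks p z (p.length + 1) 0, IsBreakAt p z i) ∧
    (greedyBreaks p z (p.length + 1) 0).Pairwise (fun i j => i + z ≤ j) ∧
    (∀ S : Finset ℕ, DisjointBreakFamily p z S →
      S.card ≤ (greedyBreaks p z (p.length + 1) 0).length) :=
  ⟨fun _ hi => isBreakAt_of_mem_greedyBreaks hi, pairwise_greedyBreaks _ _,
    fun _ hS => hS.card_le_length_greedyBreaks hz (by omega) fun j _ => j.zero_le⟩
end

section
/- Let f = f_l f_r be a string of length at most 2m split so that |f_l|, |f_r| ≤ m, and let p be a pattern of length m containing at most 2k-1 pairwise disjoint z-breaks (i.e., fewer than 2k). Let f_l' be the shortest suffix of f_l containing exactly 3k disjoint z-breaks (or all of f_l if none exists), and f_r' the shortest prefix of f_r containing exactly 3k disjoint z-breaks (or all of f_r). Then every length-m factor of f whose Hamming distance to p is at most k lies entirely within f' = f_l' f_r'. -/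
theorem List.take_drop_take_drop {α : Type*} (f : List α) {i m t z : ℕ} (h : t + z ≤ m) :
    (((f.drop i).take m).drop t).take z = (f.drop (i + t)).take z := by
  rw [List.drop_take, List.take_take, min_eq_left (by omega), List.drop_drop]

theorem List.IsSuffix.take_drop_append {α : Type*} {u l : List α} (h : u <:+ l) (r : List α) :
    ((l ++ r).drop (l.length - u.length)).take u.length = u := by
  rw [List.drop_append_of_le_length (by omega), ← List.suffix_iff_eq_drop.1 h, List.take_left]

theorem List.IsPrefix.take_drop_append {α : Type*} {u r : List α} (h : u <+: r) (l : List α) :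
    ((l ++ r).drop l.length).take u.length = u := by
  rw [List.drop_left, ← List.prefix_iff_eq_take.1 h]

theorem take_drop_eq_of_getElem?_eq {α : Type*} {w p : List α} {j z : ℕ}
    (h : ∀ d, j ≤ d → d < j + z → w[d]? = p[d]?) :
    (w.drop j).take z = (p.drop j).take z := by
  refine List.ext_getElem? fun n => ?_
  by_cases hn : n < z
  · rw [List.getElem?_take_of_lt hn, List.getElem?_take_of_lt hn, List.getElem?_drop,
      List.getElem?_drop]
    exact h (j + n) (by omega) (by omega)
  · rw [List.getElem?_eq_none_iff.2, List.getElem?_eq_none_iff.2] <;>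
      simp only [List.length_take, List.length_drop] <;> omega

theorem IsBreakAt.of_take_drop_eq {α : Type*} {s w : List α} {z j t : ℕ}
    (hb : IsBreakAt s z j) (h : (w.drop t).take z = (s.drop j).take z)
    (ht : t + z ≤ w.length) : IsBreakAt w z t :=
  ⟨ht, fun q hq => hb.2 q (h ▸ hq)⟩

theorem IsBreakAt.of_getElem?_eq {α : Type*} {w p : List α} {z j : ℕ} (hb : IsBreakAt w z j)
    (hlen : w.length = p.length) (h : ∀ d, j ≤ d → d < j + z → w[d]? = p[d]?) :
    IsBreakAt p z j :=
  hb.of_take_drop_eq (take_drop_eq_of_getElem?_eq h).symm (hlen ▸ hb.1)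

theorem card_filter_exists_mem_window_le {S : Finset ℕ} (D : Finset ℕ) {z : ℕ}
    (hS : ∀ i ∈ S, ∀ j ∈ S, i < j → i + z ≤ j) :
    (S.filter fun j => ∃ d ∈ D, j ≤ d ∧ d < j + z).card ≤ D.card := by
  refine Finset.card_le_card_of_forall_subsingleton (fun j d => j ≤ d ∧ d < j + z)
    (fun j hj => by simpa using (Finset.mem_filter.1 hj).2) fun d _ j₁ hj₁ j₂ hj₂ => ?_
  simp only [Finset.mem_filter, Set.mem_ofPred_eq] at hj₁ hj₂
  rcases lt_trichotomy j₁ j₂ with h | h | h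
  · have := hS _ hj₁.1.1 _ hj₂.1.1 h; omega
  · exact h
  · have := hS _ hj₂.1.1 _ hj₁.1.1 h; omega

theorem DisjointBreakFamily.exists_of_hamming_le {α : Type*} [DecidableEq α] {w p : List α}
    {z k : ℕ} {S : Finset ℕ} (hS : DisjointBreakFamily w z S) (hlen : w.length = p.length)
    (hham : hamming w p ≤ k) :
    ∃ T : Finset ℕ, DisjointBreakFamily p z T ∧ S.card ≤ T.card + k := by
  set D := (Finset.range w.length).filter fun d => w[d]? ≠ p[d]?
  set hit : ℕ → Prop := fun j => ∃ d ∈ D, j ≤ d ∧ d < j + z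
  refine ⟨S.filter fun j => ¬hit j, ⟨fun j hj => ?_, fun i hi j hj => hS.2 i
    (Finset.mem_of_mem_filter _ hi) j (Finset.mem_of_mem_filter _ hj)⟩, ?_⟩
  · obtain ⟨hjS, hclean⟩ := Finset.mem_filter.1 hj
    have hb := hS.1 j hjS
    refine hb.of_getElem?_eq hlen fun d hjd hdz => ?_
    by_contra hne
    have hd : d < w.length := by have := hb.1; omega
    exact hclean ⟨d, Finset.mem_filter.2 ⟨Finset.mem_range.2 hd, hne⟩, hjd, hdz⟩
  · have hhit : (S.filter hit).card ≤ D.card := card_filter_exists_mem_window_le D hS.2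
    have hsplit := Finset.card_filter_add_card_filter_not (s := S) hit
    have hD : D.card ≤ k := hham
    omega

theorem DisjointBreakFamily.image_add {α : Type*} {u w : List α} {z c : ℕ} {S : Finset ℕ}
    (hS : DisjointBreakFamily u z S) (hc : c + u.length ≤ w.length)
    (hu : (w.drop c).take u.length = u) :
    DisjointBreakFamily w z (S.image (c + ·)) := by
  refine ⟨fun t ht => ?_, fun t₁ ht₁ t₂ ht₂ hlt => ?_⟩
  · obtain ⟨j, hj, rfl⟩ := Finset.mem_image.1 ht
    have hb := hS.1 j hj
    have hjz := hb.1
    have hfac : (w.drop (c + j)).take z = (u.drop j).take z := by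
      conv_rhs => rw [← hu]
      rw [List.take_drop_take_drop _ (by omega)]
    exact hb.of_take_drop_eq hfac (by omega)
  · obtain ⟨j₁, hj₁, rfl⟩ := Finset.mem_image.1 ht₁
    obtain ⟨j₂, hj₂, rfl⟩ := Finset.mem_image.1 ht₂
    have := hS.2 j₁ hj₁ j₂ hj₂ (by omega)
    omega

theorem card_breakFamily_lt_of_hamming_le {α : Type*} [DecidableEq α] {w p u : List α}
    {z k c : ℕ} {S : Finset ℕ} (hlen : w.length = p.length) (hham : hamming w p ≤ k)
    (hpfew : ∀ T : Finset ℕ, DisjointBreakFamily p z T → T.card < 2 * k)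
    (hc : c + u.length ≤ w.length) (hu : (w.drop c).take u.length = u)
    (hS : DisjointBreakFamily u z S) :
    S.card < 3 * k := by
  obtain ⟨T, hT, hcard⟩ := (hS.image_add hc hu).exists_of_hamming_le hlen hham
  rw [Finset.card_image_of_injective _ (add_right_injective c)] at hcard
  have := hpfew T hT
  omega

theorem matches_lie_in_trimmed_general {α : Type*} [DecidableEq α]
    (p fl fr fl' fr' : List α) (m k z : ℕ)
    (hp : p.length = m) (hfl : fl.length ≤ m) (hfr : fr.length ≤ m)
    (hpfew : ∀ S : Finset ℕ, DisjointBreakFamily p z S → S.card < 2 * k)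
    (hsuf : fl'.IsSuffix fl) (hpre : fr'.IsPrefix fr)
    (hfl' : (∃ S : Finset ℕ, DisjointBreakFamily fl' z S ∧ S.card = 3 * k) ∨ fl' = fl)
    (hfr' : (∃ S : Finset ℕ, DisjointBreakFamily fr' z S ∧ S.card = 3 * k) ∨ fr' = fr)
    (i : ℕ) (hi : i + m ≤ (fl ++ fr).length)
    (hmatch : hamming (((fl ++ fr).drop i).take m) p ≤ k) :
    fl.length - fl'.length ≤ i ∧ i + m ≤ fl.length + fr'.length := by
  rw [List.length_append] at hi
  have hlen : (((fl ++ fr).drop i).take m).length = p.length := by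
    simp only [List.length_take, List.length_drop, List.length_append]
    omega
  have hfl'len := hsuf.length_le
  have hfr'len := hpre.length_le
  constructor
  · by_contra! hout
    obtain ⟨S, hS, hcard⟩ | rfl := hfl'
    · have hu := hsuf.take_drop_append fr
      rw [show fl.length - fl'.length = i + (fl.length - fl'.length - i) by omega,
        ← List.take_drop_take_drop (m := m) _ (by omega)] at hu
      have := card_breakFamily_lt_of_hamming_le hlen hmatch hpfew (by rw [hlen]; omega) hu hS
      omega
    · omega
  · by_contra! hout
    obtain ⟨S, hS, hcard⟩ | rfl := hfr'
    · have hu := hpre.take_drop_append fl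
      rw [show fl.length = i + (fl.length - i) by omega,
        ← List.take_drop_take_drop (m := m) _ (by omega)] at hu
      have := card_breakFamily_lt_of_hamming_le hlen hmatch hpfew (by rw [hlen]; omega) hu hS
      omega
    · omega

/-- Lemma 11 of the paper.  `f = fl ++ fr` with `|fl|, |fr| ≤ m`, the pattern `p`
of length `m` has fewer than `2k` pairwise disjoint `z`-breaks, `fl'` is the
shortest suffix of `fl` containing exactly `3k` disjoint `z`-breaks (or all of
`fl` if none exists), and `fr'` is the shortest prefix of `fr` containing exactly
`3k` disjoint `z`-breaks (or all of `fr`).  Then every length-`m` factor of `f`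
with Hamming distance at most `k` to `p` lies entirely within `f' = fl' ++ fr'`. -/
theorem matches_lie_in_trimmed {α : Type*} [DecidableEq α]
    (p fl fr fl' fr' : List α) (m k z : ℕ) (hz : 0 < z) (hk : 0 < k)
    (hp : p.length = m) (hfl : fl.length ≤ m) (hfr : fr.length ≤ m)
    (hpfew : ∀ S : Finset ℕ, DisjointBreakFamily p z S → S.card < 2 * k)
    (hsuf : fl'.IsSuffix fl) (hpre : fr'.IsPrefix fr)
    (hfl' : (∃ S : Finset ℕ, DisjointBreakFamily fl' z S ∧ S.card = 3 * k) ∨ fl' = fl)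
    (hfr' : (∃ S : Finset ℕ, DisjointBreakFamily fr' z S ∧ S.card = 3 * k) ∨ fr' = fr)
    (hflmin : ∀ s : List α, s.IsSuffix fl → s.length < fl'.length →
        ¬∃ S : Finset ℕ, DisjointBreakFamily s z S ∧ S.card = 3 * k)
    (hfrmin : ∀ s : List α, s.IsPrefix fr → s.length < fr'.length →
        ¬∃ S : Finset ℕ, DisjointBreakFamily s z S ∧ S.card = 3 * k)
    (i : ℕ) (hi : i + m ≤ (fl ++ fr).length)
    (hmatch : hamming (((fl ++ fr).drop i).take m) p ≤ k) :
    fl.length - fl'.length ≤ i ∧ i + m ≤ fl.length + fr'.length :=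
  matches_lie_in_trimmed_general p fl fr fl' fr' m k z hp hfl hfr hpfew hsuf hpre hfl' hfr' i hi
    hmatch
end

section
/- With f_l', f_r' defined as the shortest suffix/prefix of f_l, f_r containing exactly 3k disjoint z-breaks (or the whole string if fewer exist), the concatenation f' = f_l' f_r' contains at most 6k+1 pairwise disjoint z-breaks. -/
/-! A family of disjoint `z`-breaks of `fl' ++ fr'` splits into the breaks lying inside `fl'`,
those lying inside `fr'`, and those straddling the gluing point. The first two are disjoint
break families of `fl'` and (after shifting) of `fr'`, and since the occurrences are disjoint,
at most one of them can contain the gluing point. -/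

namespace IsBreakAt

variable {α : Type*} {p s : List α} {z i : ℕ}

theorem of_append_left (h : IsBreakAt (p ++ s) z i) (hi : i + z ≤ p.length) :
    IsBreakAt p z i := by
  refine ⟨hi, fun q hq => h.2 q ?_⟩
  rwa [List.drop_append_of_le_length (by omega),
    List.take_append_of_le_length (by simp only [List.length_drop]; omega)]

theorem of_append_right (h : IsBreakAt (p ++ s) z (p.length + i)) : IsBreakAt s z i := by
  refine ⟨by have := h.1; rw [List.length_append] at this; omega, fun q hq => h.2 q ?_⟩
  rwa [List.drop_append, List.drop_eq_nil_of_le (by omega), List.nil_append,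
    Nat.add_sub_cancel_left]

end IsBreakAt

theorem card_filter_straddling_le_one {S : Finset ℕ} {z L : ℕ}
    (hsep : ∀ i ∈ S, ∀ j ∈ S, i < j → i + z ≤ j) :
    (S.filter fun i => L < i + z ∧ i < L).card ≤ 1 := by
  refine Finset.card_le_one.mpr fun a ha b hb => ?_
  rw [Finset.mem_filter] at ha hb
  rcases lt_trichotomy a b with hab | hab | hab
  · have := hsep a ha.1 b hb.1 hab; omega
  · exact hab
  · have := hsep b hb.1 a ha.1 hab; omega

namespace DisjointBreakFamily

variable {α : Type*} {p s : List α} {z : ℕ} {S : Finset ℕ}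

theorem filter_append_left (h : DisjointBreakFamily (p ++ s) z S) :
    DisjointBreakFamily p z (S.filter fun i => i + z ≤ p.length) := by
  simp only [DisjointBreakFamily, Finset.mem_filter]
  exact ⟨fun i hi => (h.1 i hi.1).of_append_left hi.2, fun i hi j hj => h.2 i hi.1 j hj.1⟩

theorem image_sub_filter_append_right (h : DisjointBreakFamily (p ++ s) z S) :
    DisjointBreakFamily s z ((S.filter fun i => p.length ≤ i).image (· - p.length)) := by
  simp only [DisjointBreakFamily, Finset.forall_mem_image, Finset.mem_filter]
  refine ⟨fun i hi => ?_, fun i hi j hj hij => ?_⟩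
  · refine IsBreakAt.of_append_right (p := p) ?_
    rw [Nat.add_sub_cancel' hi.2]
    exact h.1 i hi.1
  · have := h.2 i hi.1 j hj.1 (by omega)
    omega

end DisjointBreakFamily

theorem trimmed_text_few_breaks_general {α : Type*} (fl' fr' : List α) (k z : ℕ)
    (hl : ∀ S : Finset ℕ, DisjointBreakFamily fl' z S → S.card ≤ 3 * k)
    (hr : ∀ S : Finset ℕ, DisjointBreakFamily fr' z S → S.card ≤ 3 * k) :
    ∀ S : Finset ℕ, DisjointBreakFamily (fl' ++ fr') z S → S.card ≤ 6 * k + 1 := by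
  intro S hS
  set L := fl'.length
  set Sl := S.filter fun i => i + z ≤ L
  set Sm := S.filter fun i => L < i + z ∧ i < L
  set Sr := S.filter fun i => L ≤ i
  have hSl : Sl.card ≤ 3 * k := hl _ hS.filter_append_left
  have hSm : Sm.card ≤ 1 := card_filter_straddling_le_one hS.2
  have hSr : Sr.card ≤ 3 * k := by
    rw [← Finset.card_image_of_injOn fun a ha b hb (hab : a - L = b - L) => by
      simp only [Finset.coe_filter, Set.mem_ofPred_eq, Sr] at ha hb; omega]
    exact hr _ hS.image_sub_filter_append_right
  have hcover : S ⊆ Sl ∪ Sm ∪ Sr := fun i hi => by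
    simp only [Finset.mem_union, Finset.mem_filter, hi, true_and, Sl, Sm, Sr]
    omega
  calc S.card ≤ (Sl ∪ Sm ∪ Sr).card := Finset.card_le_card hcover
    _ ≤ Sl.card + Sm.card + Sr.card :=
        (Finset.card_union_le _ _).trans (by gcongr; exact Finset.card_union_le _ _)
    _ ≤ 6 * k + 1 := by omega

/-- If `fl'` contains at most `3k` pairwise disjoint `z`-breaks and so does `fr'`,
then the concatenation `f' = fl' ++ fr'` contains at most `6k+1` pairwise disjoint
`z`-breaks. -/
theorem trimmed_text_few_breaks {α : Type*} (fl' fr' : List α) (k z : ℕ) (hz : 0 < z)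
    (hl : ∀ S : Finset ℕ, DisjointBreakFamily fl' z S → S.card ≤ 3 * k)
    (hr : ∀ S : Finset ℕ, DisjointBreakFamily fr' z S → S.card ≤ 3 * k) :
    ∀ S : Finset ℕ, DisjointBreakFamily (fl' ++ fr') z S → S.card ≤ 6 * k + 1 :=
  trimmed_text_few_breaks_general fl' fr' k z hl hr
end

section
/- Let w be a string of length ℓ with smallest period q ≤ z/2, let v be a string of the same length ℓ with smallest period q' ≤ z/2, and suppose the canonical (cyclic) representatives of the minimal-period words of w and v differ. If w ≠ v then the Hamming distance between w and v is at least ⌊ℓ/z⌋, where z ≥ 2q and z ≥ 2q'. -/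
/-- In any residue window `[a, a+q)` there is a representative of `i` mod `q`. -/
lemma exists_rep (a i q : ℕ) (hq : 0 < q) :
    ∃ p, a ≤ p ∧ p < a + q ∧ p % q = i % q := by
  have ha := Nat.div_add_mod a q
  have har : a % q < q := Nat.mod_lt _ hq
  have hir : i % q < q := Nat.mod_lt _ hq
  rcases le_or_gt (a % q) (i % q) with h | h
  · refine ⟨q * (a / q) + i % q, by omega, by omega, ?_⟩
    rw [Nat.mul_add_mod]
    exact Nat.mod_mod_of_dvd i dvd_rfl
  · refine ⟨q * (a / q + 1) + i % q, by rw [Nat.mul_add, Nat.mul_one]; omega,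
      by rw [Nat.mul_add, Nat.mul_one]; omega, ?_⟩
    rw [Nat.mul_add_mod]
    exact Nat.mod_mod_of_dvd i dvd_rfl

lemma get?_mod {α : Type*} {s : List α} {q : ℕ} (h : IsPeriod s q) :
    ∀ i, i < s.length → s[i]? = s[i % q]? := by
  intro i
  induction i using Nat.strong_induction_on with
  | _ i ih =>
    intro hi
    rcases lt_or_ge i q with hlt | hle
    · rw [Nat.mod_eq_of_lt hlt]
    · have hq0 : 0 < q := h.1
      have hstep := h.2.2 (i - q) (by omega)
      rw [show (i - q) + q = i from by omega] at hstep
      rw [← hstep, ih (i - q) (by omega) (by omega), Nat.mod_eq_sub_mod hle]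

lemma get?_congr {α : Type*} {s : List α} {q i j : ℕ} (h : IsPeriod s q)
    (hij : i % q = j % q) (hi : i < s.length) (hj : j < s.length) :
    s[i]? = s[j]? := by
  rw [get?_mod h i hi, get?_mod h j hj, hij]

/-- Two distinct aligned strings of the same length `ℓ` with smallest periods
`q ≤ z/2` and `q' ≤ z/2`, whose canonical (cyclic) period words differ (the
minimal-period word of `v` is not a rotation of that of `w`), have Hamming
distance at least `⌊ℓ/z⌋`. -/
theorem periodic_stretch_mismatches {α : Type*} [DecidableEq α]
    (w v : List α) (z q q' : ℕ) (hlen : w.length = v.length)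
    (hq : SmallestPeriod w q) (hq' : SmallestPeriod v q')
    (hqz : 2 * q ≤ z) (hq'z : 2 * q' ≤ z)
    (hrot : ∀ r : ℕ, v.take q' ≠ (w.take q).rotate r)
    (hne : w ≠ v) :
    w.length / z ≤ hamming w v := by
  classical
  obtain ⟨hqP, hqmin⟩ := hq
  obtain ⟨hq'P, hq'min⟩ := hq'
  obtain ⟨hq0, hqlen, hwp⟩ := hqP
  obtain ⟨hq'0, hq'len, hvp⟩ := hq'P
  have hz : 0 < z := by omega
  -- core: every window of length z contains a mismatch
  have core : ∀ a, a + z ≤ w.length →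
      ∃ i, a ≤ i ∧ i < a + z ∧ w[i]? ≠ v[i]? := by
    intro a ha
    by_contra hcon
    push_neg at hcon
    have hag : ∀ p, a ≤ p → p < a + z → w[p]? = v[p]? := hcon
    have hwP : IsPeriod w q := ⟨hq0, hqlen, hwp⟩
    have hvP : IsPeriod v q' := ⟨hq'0, hq'len, hvp⟩
    -- v has period q
    have hvq : IsPeriod v q := by
      refine ⟨hq0, by omega, ?_⟩
      intro i hi
      obtain ⟨p, hp1, hp2, hp3⟩ := exists_rep a i q' hq'0
      have e1 : v[i]? = v[p]? :=
        get?_congr hvP hp3.symm (by omega) (by omega)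
      have e2 := hag p hp1 (by omega)
      have e3 := hwp p (by omega)
      have e4 := hag (p + q) (by omega) (by omega)
      have e5 : v[p + q]? = v[i + q]? :=
        get?_congr hvP (by rw [Nat.add_mod, hp3, ← Nat.add_mod]) (by omega) (by omega)
      rw [e1, ← e2, e3, e4, e5]
    -- w has period q'
    have hwq' : IsPeriod w q' := by
      refine ⟨hq'0, by omega, ?_⟩
      intro i hi
      obtain ⟨p, hp1, hp2, hp3⟩ := exists_rep a i q hq0
      have e1 : w[i]? = w[p]? :=
        get?_congr hwP hp3.symm (by omega) (by omega)
      have e2 := hag p hp1 (by omega)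
      have e3 := hvp p (by omega)
      have e4 := hag (p + q') (by omega) (by omega)
      have e5 : w[p + q']? = w[i + q']? :=
        get?_congr hwP (by rw [Nat.add_mod, hp3, ← Nat.add_mod]) (by omega) (by omega)
      rw [e1, e2, e3, ← e4, e5]
    have h1 : q' ≤ q := hq'min q hvq
    have h2 : q ≤ q' := hqmin q' hwq'
    have hqq : q' = q := le_antisymm h1 h2
    subst hqq
    apply hrot 0
    rw [List.rotate_zero]
    apply List.ext_getElem?
    intro n
    rcases lt_or_ge n q' with hn | hn
    · rw [List.getElem?_take_of_lt hn, List.getElem?_take_of_lt hn]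
      obtain ⟨p, hp1, hp2, hp3⟩ := exists_rep a n q' hq0
      have ev : v[n]? = v[p]? :=
        get?_congr hvP hp3.symm (by omega) (by omega)
      have ew : w[n]? = w[p]? :=
        get?_congr hwP hp3.symm (by omega) (by omega)
      rw [ev, ew, hag p hp1 (by omega)]
    · rw [List.getElem?_eq_none_iff.2 (by simp [List.length_take]; omega),
        List.getElem?_eq_none_iff.2 (by simp [List.length_take]; omega)]
  -- counting: one mismatch per block of length z
  set ℓ := w.length with hℓ
  set m := ℓ / z with hm
  have hmz : m * z ≤ ℓ := Nat.div_mul_le_self ℓ z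
  have core' : ∀ k, ∃ i,
      k < m → k * z ≤ i ∧ i < k * z + z ∧ w[i]? ≠ v[i]? := by
    intro k
    by_cases hk : k < m
    · have hkz : k * z + z ≤ ℓ := by
        have : (k + 1) * z ≤ m * z := Nat.mul_le_mul_right z (by omega)
        rw [Nat.add_mul, Nat.one_mul] at this
        omega
      obtain ⟨i, h1, h2, h3⟩ := core (k * z) hkz
      exact ⟨i, fun _ => ⟨h1, h2, h3⟩⟩
    · exact ⟨0, fun h => absurd h hk⟩
  choose f hf using core'
  have : (Finset.range m).card ≤ hamming w v := by
    unfold hamming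
    apply Finset.card_le_card_of_injOn f
    · intro k hk
      rw [Finset.mem_coe, Finset.mem_range] at hk
      obtain ⟨h1, h2, h3⟩ := hf k hk
      rw [Finset.mem_coe, Finset.mem_filter, Finset.mem_range]
      have hkz : k * z + z ≤ ℓ := by
        have : (k + 1) * z ≤ m * z := Nat.mul_le_mul_right z (by omega)
        rw [Nat.add_mul, Nat.one_mul] at this
        omega
      exact ⟨by omega, h3⟩
    · intro k1 hk1 k2 hk2 hfeq
      rw [Finset.mem_coe, Finset.mem_range] at hk1 hk2
      obtain ⟨a1, b1, -⟩ := hf k1 hk1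
      obtain ⟨a2, b2, -⟩ := hf k2 hk2
      by_contra hne12
      rcases lt_or_gt_of_ne hne12 with h | h
      · have : (k1 + 1) * z ≤ k2 * z := Nat.mul_le_mul_right z (by omega)
        rw [Nat.add_mul, Nat.one_mul] at this
        omega
      · have : (k2 + 1) * z ≤ k1 * z := Nat.mul_le_mul_right z (by omega)
        rw [Nat.add_mul, Nat.one_mul] at this
        omega
  rwa [Finset.card_range] at this
end

section
/- Let p be a pattern of length m containing at least 2k pairwise disjoint z-breaks, let f be a text, and partition the alignment positions into consecutive windows of length k. If some factor f[i..j] has edit distance at most k to p, then the total number of break-marks falling in the window containing i and its two neighbouring windows is at least k. -/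
/-- Cost structure for Levenshtein distance (formerly in Mathlib). -/
structure Levenshtein.Cost (α β δ : Type*) where
  delete : α → δ
  insert : β → δ
  substitute : α → β → δ

def Levenshtein.defaultCost {α : Type*} [DecidableEq α] : Levenshtein.Cost α α ℕ where
  delete _ := 1
  insert _ := 1
  substitute a b := if a = b then 0 else 1

def Levenshtein.impl {α β δ : Type*} [AddZeroClass δ] [Min δ] (C : Levenshtein.Cost α β δ)
    (xs : List α) (y : β) (d : {r : List δ // 0 < r.length}) : {r : List δ // 0 < r.length} :=
  let ⟨ds, w⟩ := d
  xs.zip (ds.zip ds.tail) |>.foldr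
    (init := ⟨[C.insert y + ds.getLast (List.ne_nil_of_length_pos w)], by simp⟩)
    (fun ⟨x, d₀, d₁⟩ ⟨r, w⟩ =>
      ⟨min (C.delete x + r[0]) (min (C.insert y + d₀) (C.substitute x y + d₁)) :: r, by simp⟩)

def suffixLevenshtein {α β δ : Type*} [AddZeroClass δ] [Min δ] (C : Levenshtein.Cost α β δ)
    (xs : List α) (ys : List β) : {r : List δ // 0 < r.length} :=
  ys.foldr
    (Levenshtein.impl C xs)
    (xs.foldr (init := ⟨[0], by simp⟩) (fun a ⟨r, w⟩ => ⟨(C.delete a + r[0]) :: r, by simp⟩))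

def levenshtein {α β δ : Type*} [AddZeroClass δ] [Min δ] (C : Levenshtein.Cost α β δ)
    (xs : List α) (ys : List β) : δ :=
  let ⟨r, w⟩ := suffixLevenshtein C xs ys
  r[0]

section Recurrence

variable {α β δ : Type*} [AddZeroClass δ] [Min δ] (C : Levenshtein.Cost α β δ)

theorem Levenshtein.impl_cons_fst (x : α) (xs : List α) (y : β) (a e : δ) (es : List δ) :
    (Levenshtein.impl C (x :: xs) y ⟨a :: e :: es, by simp⟩).1 =
      min (C.delete x + (Levenshtein.impl C xs y ⟨e :: es, by simp⟩).1.headD 0)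
        (min (C.insert y + a) (C.substitute x y + e)) ::
        (Levenshtein.impl C xs y ⟨e :: es, by simp⟩).1 := by
  simp only [Levenshtein.impl, List.zip_cons_cons, List.tail_cons, List.foldr_cons,
    List.getLast_cons_cons]
  generalize List.foldr _ _ (List.zip xs ((e :: es).zip es)) = R
  rcases R with ⟨_ | ⟨b, r⟩, hR⟩
  · simp at hR
  · rfl

theorem levenshtein_eq_headD (xs : List α) (ys : List β) :
    levenshtein C xs ys = (suffixLevenshtein C xs ys).1.headD 0 := by
  unfold levenshtein
  generalize suffixLevenshtein C xs ys = s
  rcases s with ⟨_ | ⟨b, r⟩, hs⟩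
  · simp at hs
  · rfl

theorem suffixLevenshtein_cons_tail (x : α) (xs : List α) :
    ∀ ys : List β, (suffixLevenshtein C (x :: xs) ys).1.tail = (suffixLevenshtein C xs ys).1
  | [] => rfl
  | y :: ys => by
    have ih := suffixLevenshtein_cons_tail x xs ys
    change (Levenshtein.impl C (x :: xs) y (suffixLevenshtein C (x :: xs) ys)).1.tail =
      (Levenshtein.impl C xs y (suffixLevenshtein C xs ys)).1
    generalize suffixLevenshtein C (x :: xs) ys = s₁ at ih ⊢
    generalize suffixLevenshtein C xs ys = s₂ at ih ⊢
    rcases s₁ with ⟨_ | ⟨a, r⟩, w₁⟩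
    · simp at w₁
    rcases s₂ with ⟨_ | ⟨e, es⟩, w₂⟩
    · simp at w₂
    obtain rfl : r = e :: es := ih
    rw [Levenshtein.impl_cons_fst]
    rfl

theorem suffixLevenshtein_nil_left : ∀ ys : List β,
    ∃ d, (suffixLevenshtein C ([] : List α) ys).1 = [d]
  | [] => ⟨0, rfl⟩
  | y :: ys => by
    obtain ⟨d, hd⟩ := suffixLevenshtein_nil_left ys
    change ∃ d, (Levenshtein.impl C [] y (suffixLevenshtein C [] ys)).1 = [d]
    generalize suffixLevenshtein C [] ys = s at hd ⊢
    obtain ⟨r, w⟩ := s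
    obtain rfl : r = [d] := hd
    exact ⟨_, rfl⟩

@[simp] theorem levenshtein_nil_nil : levenshtein C ([] : List α) ([] : List β) = 0 := rfl

@[simp] theorem levenshtein_nil_cons (y : β) (ys : List β) :
    levenshtein C ([] : List α) (y :: ys) = C.insert y + levenshtein C [] ys := by
  obtain ⟨d, hd⟩ := suffixLevenshtein_nil_left C ys
  simp only [levenshtein_eq_headD]
  change (Levenshtein.impl C [] y (suffixLevenshtein C [] ys)).1.headD 0 = _
  generalize suffixLevenshtein C [] ys = s at hd ⊢
  obtain ⟨r, w⟩ := s
  obtain rfl : r = [d] := hd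
  rfl

@[simp] theorem levenshtein_cons_nil (x : α) (xs : List α) :
    levenshtein C (x :: xs) ([] : List β) = C.delete x + levenshtein C xs [] := rfl

theorem levenshtein_cons_cons (x : α) (xs : List α) (y : β) (ys : List β) :
    levenshtein C (x :: xs) (y :: ys) =
      min (C.delete x + levenshtein C xs (y :: ys))
        (min (C.insert y + levenshtein C (x :: xs) ys)
          (C.substitute x y + levenshtein C xs ys)) := by
  have htail := suffixLevenshtein_cons_tail C x xs ys
  simp only [levenshtein_eq_headD]
  change (Levenshtein.impl C (x :: xs) y (suffixLevenshtein C (x :: xs) ys)).1.headD 0 =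
    min (C.delete x + (Levenshtein.impl C xs y (suffixLevenshtein C xs ys)).1.headD 0) _
  generalize suffixLevenshtein C (x :: xs) ys = s₁ at htail ⊢
  generalize suffixLevenshtein C xs ys = s₂ at htail ⊢
  rcases s₁ with ⟨_ | ⟨a, r⟩, w₁⟩
  · simp at w₁
  rcases s₂ with ⟨_ | ⟨e, es⟩, w₂⟩
  · simp at w₂
  obtain rfl : r = e :: es := htail
  rw [Levenshtein.impl_cons_fst]
  rfl

end Recurrence

section Split

variable {α β δ : Type*} [AddCommMonoid δ] [LinearOrder δ] (C : Levenshtein.Cost α β δ)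

theorem levenshtein_cons_right_le (t : List α) (y : β) (u : List β) :
    levenshtein C t (y :: u) ≤ C.insert y + levenshtein C t u := by
  cases t with
  | nil => rw [levenshtein_nil_cons]
  | cons x t => exact (levenshtein_cons_cons C x t y u ▸ min_le_right _ _).trans (min_le_left _ _)

theorem exists_append_levenshtein_add_le [IsOrderedAddMonoid δ] :
    ∀ (t : List α) (u v : List β), ∃ t₁ t₂, t = t₁ ++ t₂ ∧
      levenshtein C t₁ u + levenshtein C t₂ v ≤ levenshtein C t (u ++ v)
  | t, [], v => ⟨[], t, rfl, by simp⟩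
  | [], y :: u, v => by
    obtain ⟨t₁, t₂, h, hle⟩ := exists_append_levenshtein_add_le [] u v
    obtain ⟨rfl, rfl⟩ := List.append_eq_nil_iff.mp h.symm
    refine ⟨[], [], rfl, ?_⟩
    rw [List.cons_append, levenshtein_nil_cons, levenshtein_nil_cons, add_assoc]
    gcongr
  | x :: t, y :: u, v => by
    rw [List.cons_append, levenshtein_cons_cons]
    rcases min_choice (α := δ) _ _ with hmin | hmin <;> rw [hmin]
    · obtain ⟨t₁, t₂, rfl, hle⟩ := exists_append_levenshtein_add_le t (y :: u) v
      refine ⟨x :: t₁, t₂, rfl, ?_⟩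
      have hdel : levenshtein C (x :: t₁) (y :: u) ≤ C.delete x + levenshtein C t₁ (y :: u) :=
        levenshtein_cons_cons C x t₁ y u ▸ min_le_left _ _
      calc _ ≤ C.delete x + levenshtein C t₁ (y :: u) + levenshtein C t₂ v := by gcongr
        _ ≤ _ := by rw [add_assoc]; gcongr; exact hle
    rcases min_choice (α := δ) _ _ with hmin | hmin <;> rw [hmin]
    · obtain ⟨t₁, t₂, h, hle⟩ := exists_append_levenshtein_add_le (x :: t) u v
      refine ⟨t₁, t₂, h, ?_⟩
      calc _ ≤ C.insert y + levenshtein C t₁ u + levenshtein C t₂ v := by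
            gcongr; exact levenshtein_cons_right_le C t₁ y u
        _ ≤ _ := by rw [add_assoc]; gcongr
    · obtain ⟨t₁, t₂, rfl, hle⟩ := exists_append_levenshtein_add_le t u v
      refine ⟨x :: t₁, t₂, rfl, ?_⟩
      have hsub : levenshtein C (x :: t₁) (y :: u) ≤ C.substitute x y + levenshtein C t₁ u :=
        (levenshtein_cons_cons C x t₁ y u ▸ min_le_right _ _).trans (min_le_right _ _)
      calc _ ≤ C.substitute x y + levenshtein C t₁ u + levenshtein C t₂ v := by gcongr
        _ ≤ _ := by rw [add_assoc]; gcongr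
  termination_by t u => t.length + u.length

end Split

section DefaultCost

open Levenshtein

variable {α : Type*} [DecidableEq α]

@[simp] theorem Levenshtein.defaultCost_delete (a : α) :
    (defaultCost (α := α)).delete a = 1 := rfl

@[simp] theorem Levenshtein.defaultCost_insert (a : α) :
    (defaultCost (α := α)).insert a = 1 := rfl

@[simp] theorem Levenshtein.defaultCost_substitute (a b : α) :
    (defaultCost (α := α)).substitute a b = if a = b then 0 else 1 := rfl

theorem length_sub_length_le_levenshtein :
    ∀ t u : List α, t.length - u.length ≤ levenshtein defaultCost t u
  | [], _ => by simp
  | x :: t, [] => by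
    have := length_sub_length_le_levenshtein t []
    simp only [levenshtein_cons_nil, defaultCost_delete, List.length_cons] at *
    omega
  | x :: t, y :: u => by
    have hdel := length_sub_length_le_levenshtein t (y :: u)
    have hins := length_sub_length_le_levenshtein (x :: t) u
    have hsub := length_sub_length_le_levenshtein t u
    simp only [levenshtein_cons_cons, le_min_iff, defaultCost_delete, defaultCost_insert,
      defaultCost_substitute, List.length_cons] at *
    split_ifs <;> omega
  termination_by t u => t.length + u.length

theorem length_sub_length_le_levenshtein' :
    ∀ t u : List α, u.length - t.length ≤ levenshtein defaultCost t u
  | _, [] => by simp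
  | [], y :: u => by
    have := length_sub_length_le_levenshtein' [] u
    simp only [levenshtein_nil_cons, defaultCost_insert, List.length_cons] at *
    omega
  | x :: t, y :: u => by
    have hdel := length_sub_length_le_levenshtein' t (y :: u)
    have hins := length_sub_length_le_levenshtein' (x :: t) u
    have hsub := length_sub_length_le_levenshtein' t u
    simp only [levenshtein_cons_cons, le_min_iff, defaultCost_delete, defaultCost_insert,
      defaultCost_substitute, List.length_cons] at *
    split_ifs <;> omega
  termination_by t u => t.length + u.length

theorem eq_of_levenshtein_eq_zero : ∀ {t u : List α}, levenshtein defaultCost t u = 0 → t = u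
  | [], [], _ => rfl
  | [], y :: u, h => by simp at h
  | x :: t, [], h => by simp at h
  | x :: t, y :: u, h => by
    simp only [levenshtein_cons_cons, defaultCost_delete, defaultCost_insert,
      defaultCost_substitute] at h
    split_ifs at h with hxy
    · rw [hxy, eq_of_levenshtein_eq_zero (t := t) (u := u) (by omega)]
    · omega

end DefaultCost

section Marking

open Levenshtein

variable {α : Type*}

def BlockOccursNear (f p : List α) (z i k o : ℕ) : Prop :=
  ∃ q, q + z ≤ f.length ∧ (f.drop q).take z = (p.drop o).take z ∧
    i + o ≤ q + k ∧ q ≤ i + o + k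

theorem List.take_eq_take_append_take_drop_append_drop (p : List α) {o z n : ℕ}
    (h : o + z ≤ n) :
    p.take n = p.take o ++ (p.drop o).take z ++ (p.take n).drop (o + z) := by
  conv_lhs => rw [← List.take_append_drop (o + z) (p.take n)]
  rw [List.take_take, min_eq_left h, List.take_add]

variable [DecidableEq α]

theorem blockOccursNear_of_append_prefix (f p t : List α) {z : ℕ} (hz : 0 < z) (i k a : ℕ)
    (ha : a + z ≤ p.length) (ht : t ++ (p.drop a).take z <+: f.drop i)
    (hk : levenshtein defaultCost t (p.take a) ≤ k) : BlockOccursNear f p z i k a := by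
  have hlen : ((p.drop a).take z).length = z := List.length_take_of_le (by simp; omega)
  have hdrift := length_sub_length_le_levenshtein t (p.take a)
  have hdrift' := length_sub_length_le_levenshtein' t (p.take a)
  rw [List.length_take_of_le (by omega)] at hdrift hdrift'
  have hocc : (p.drop a).take z <+: f.drop (i + t.length) := by
    simpa only [List.drop_left, List.drop_drop] using ht.drop t.length
  refine ⟨i + t.length, ?_, by rw [List.prefix_iff_eq_take.mp hocc, hlen], by omega, by omega⟩
  have := hocc.length_le
  rw [hlen, List.length_drop] at this
  omega

theorem exists_blockOccursNear_card_le (f p : List α) {z : ℕ} (hz : 0 < z) (i k : ℕ)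
    (S : Finset ℕ) (hdisj : ∀ o ∈ S, ∀ o' ∈ S, o < o' → o + z ≤ o') (n : ℕ) (t : List α)
    (hn : n ≤ p.length) (hS : ∀ o ∈ S, o + z ≤ n) (ht : t <+: f.drop i)
    (hk : levenshtein defaultCost t (p.take n) ≤ k) :
    ∃ G ⊆ S, (∀ o ∈ G, BlockOccursNear f p z i k o) ∧
      S.card ≤ levenshtein defaultCost t (p.take n) + G.card := by
  induction S using Finset.induction_on_max generalizing n t with
  | empty => exact ⟨∅, subset_rfl, by simp, by simp⟩
  | insert a S hlt ih =>
    have haS : a ∉ S := fun h => lt_irrefl a (hlt a h)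
    have hdisjS : ∀ o ∈ S, ∀ o' ∈ S, o < o' → o + z ≤ o' := fun o ho o' ho' =>
      hdisj o (Finset.mem_insert_of_mem ho) o' (Finset.mem_insert_of_mem ho')
    have hSa : ∀ o ∈ S, o + z ≤ a := fun o ho =>
      hdisj o (Finset.mem_insert_of_mem ho) a (Finset.mem_insert_self a S) (hlt o ho)
    have ha : a + z ≤ n := hS a (Finset.mem_insert_self a S)
    rw [List.take_eq_take_append_take_drop_append_drop p ha] at hk ⊢
    obtain ⟨t₁₂, t₃, rfl, hsplit₁⟩ := exists_append_levenshtein_add_le defaultCost t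
      (p.take a ++ (p.drop a).take z) ((p.take n).drop (a + z))
    obtain ⟨t₁, t₂, rfl, hsplit₂⟩ := exists_append_levenshtein_add_le defaultCost t₁₂
      (p.take a) ((p.drop a).take z)
    have ht₁₂ : t₁ ++ t₂ <+: f.drop i := (List.prefix_append _ _).trans ht
    obtain ⟨G, hGS, hG, hcard⟩ :=
      ih hdisjS a t₁ (by omega) hSa ((List.prefix_append _ _).trans ht₁₂) (by omega)
    by_cases hblock : levenshtein defaultCost t₂ ((p.drop a).take z) = 0
    · obtain rfl := eq_of_levenshtein_eq_zero hblock
      have hnear := blockOccursNear_of_append_prefix f p t₁ hz i k a (by omega) ht₁₂ (by omega)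
      refine ⟨insert a G, Finset.insert_subset_insert a hGS,
        Finset.forall_mem_insert _ _ _ |>.mpr ⟨hnear, hG⟩, ?_⟩
      rw [Finset.card_insert_of_notMem haS, Finset.card_insert_of_notMem (fun h => haS (hGS h))]
      omega
    · refine ⟨G, hGS.trans (Finset.subset_insert a S), hG, ?_⟩
      rw [Finset.card_insert_of_notMem haS]
      omega

end Marking

theorem edit_marking_general {α : Type*} [DecidableEq α] (p f : List α) (k z : ℕ)
    (hk : 0 < k) (hz : 0 < z)
    (O : Finset ℕ) (hO : DisjointBreakFamily p z O) (hOcard : O.card = 2 * k)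
    (i l : ℕ)
    (hed : levenshtein Levenshtein.defaultCost ((f.drop i).take l) p ≤ k) :
    k ≤ ((O ×ˢ Finset.range f.length).filter fun oq =>
          oq.2 + z ≤ f.length ∧
          (f.drop oq.2).take z = (p.drop oq.1).take z ∧
          (i / k) * k ≤ oq.2 - oq.1 + k ∧
          oq.2 - oq.1 < (i / k) * k + 2 * k).card := by
  obtain ⟨G, hGO, hG, hcard⟩ := exists_blockOccursNear_card_le f p hz i k O hO.2 p.length
    ((f.drop i).take l) le_rfl (fun o ho => (hO.1 o ho).1) (List.take_prefix _ _)
    (by rwa [List.take_length])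
  rw [List.take_length] at hcard
  refine (?_ : k ≤ G.card).trans
    ((Finset.card_le_card ?_).trans (Finset.card_image_le (f := Prod.fst)))
  · omega
  · intro o ho
    obtain ⟨q, hq, hocc, hnear, hnear'⟩ := hG o ho
    have := Nat.div_mul_le_self i k
    have := Nat.lt_div_mul_add (a := i) hk
    refine Finset.mem_image.mpr ⟨(o, q), Finset.mem_filter.mpr ⟨?_, hq, hocc, ?_, ?_⟩, rfl⟩
    · exact Finset.mem_product.mpr ⟨hGO ho, Finset.mem_range.mpr (by omega)⟩
    all_goals omega

/-- Marking argument for the edit-distance version (Theorem 19 of the paper).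
`O` is a set of offsets of `2k` pairwise disjoint `z`-breaks of the pattern `p`.
For every exact occurrence at position `q` in `f` of the break with offset `o`,
a mark is placed at position `q - o`.  If some factor `f[i..i+l-1]` has edit
(Levenshtein) distance at most `k` to `p`, then at least `k` marks fall into the
length-`k` window containing `i` together with its two neighbouring windows,
i.e. into `[⌊i/k⌋·k - k, ⌊i/k⌋·k + 2k)`. -/
theorem edit_marking {α : Type*} [DecidableEq α] (p f : List α) (m k z : ℕ)
    (hm : p.length = m) (hk : 0 < k) (hz : 0 < z)
    (O : Finset ℕ) (hO : DisjointBreakFamily p z O) (hOcard : O.card = 2 * k)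
    (i l : ℕ) (hil : i + l ≤ f.length)
    (hed : levenshtein Levenshtein.defaultCost ((f.drop i).take l) p ≤ k) :
    k ≤ ((O ×ˢ Finset.range f.length).filter fun oq =>
          oq.2 + z ≤ f.length ∧
          (f.drop oq.2).take z = (p.drop oq.1).take z ∧
          (i / k) * k ≤ oq.2 - oq.1 + k ∧
          oq.2 - oq.1 < (i / k) * k + 2 * k).card :=
  edit_marking_general p f k z hk hz O hO hOcard i l hed
end
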